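/- arXiv:2206.01379 — 9 statements merged into one kernel-verified Lean document; each statement's English description precedes it below -/
import Mathlib

section
/- One push operation preserves the propagation invariant (Lemma 1): Suppose x, π̂, r ∈ ℝ^n satisfy the invariant π̂ + α·r = α·x + (1−α)·P·π̂. Fix a node u ∈ V, let y = r(u), and perform one push operation at u, i.e. set π̂′ = π̂ + α·y·e_u and r′ = r − y·e_u + (1−α)·y·P·e_u, where e_u is the u-th standard basis vector. Then π̂′ + α·r′ = α·x + (1−α)·P·π̂′. Moreover, the initialization π̂ = 0, r = x satisfies the invariant; hence the invariant is maintained throughout the propagation process. -/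
section

variable {R M : Type*} [CommRing R] [AddCommGroup M] [Module R M]

/-- `p` is the estimate `π̂`, `r` the residual and `f` the propagation matrix `P` of the paper. -/
def PropagationInvariant (f : M →ₗ[R] M) (α : R) (x p r : M) : Prop :=
  p + α • r = α • x + (1 - α) • f p

theorem propagationInvariant_zero_self (f : M →ₗ[R] M) (α : R) (x : M) :
    PropagationInvariant f α x 0 x := by
  simp [PropagationInvariant]

/-- The mass `α y e` moved from `α r` into `p` cancels, and by linearity of `f` the new term
`(1 - α) f (α y e)` on the right is exactly `α` times the mass `(1 - α) y f e` added to `r`. -/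
theorem PropagationInvariant.push {f : M →ₗ[R] M} {α : R} {x p r : M}
    (h : PropagationInvariant f α x p r) (y : R) (e : M) :
    PropagationInvariant f α x (p + (α * y) • e) (r - y • e + ((1 - α) * y) • f e) := by
  unfold PropagationInvariant at h ⊢
  rw [map_add, map_smul]
  linear_combination (norm := module) h

end

theorem push_preserves_invariant_general {n : ℕ}
    (P : Matrix (Fin n) (Fin n) ℝ)
    (α : ℝ)
    (x πh r : Fin n → ℝ)
    (hinv : πh + α • r = α • x + (1 - α) • (P.mulVec πh))
    (u : Fin n) (y : ℝ)
    (πh' r' : Fin n → ℝ)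
    (hπh' : πh' = πh + (α * y) • (Pi.single u 1 : Fin n → ℝ))
    (hr' : r' = r - y • (Pi.single u 1 : Fin n → ℝ)
        + ((1 - α) * y) • (P.mulVec ((Pi.single u 1 : Fin n → ℝ)))) :
    (πh' + α • r' = α • x + (1 - α) • (P.mulVec πh')) ∧
    ((0 : Fin n → ℝ) + α • x = α • x + (1 - α) • (P.mulVec (0 : Fin n → ℝ))) := by
  subst hπh' hr'
  have hinv : PropagationInvariant P.mulVecLin α x πh r := hinv
  exact ⟨hinv.push y (Pi.single u 1), propagationInvariant_zero_self P.mulVecLin α x⟩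

/-- One push operation preserves the propagation invariant (Lemma 1), and the
initialization `π̂ = 0, r = x` satisfies the invariant. -/
theorem push_preserves_invariant {n : ℕ} (hn : 1 ≤ n)
    (A : Matrix (Fin n) (Fin n) ℝ) (hA_symm : A.IsSymm)
    (hA01 : ∀ s t, A s t = 0 ∨ A s t = 1)
    (d : Fin n → ℝ) (hd : ∀ s, d s = ∑ t, A s t) (hd1 : ∀ s, 1 ≤ d s)
    (β : ℝ) (hβ0 : 0 ≤ β) (hβ1 : β ≤ 1)
    (P : Matrix (Fin n) (Fin n) ℝ)
    (hP : ∀ s t, P s t = A s t / (d s ^ β * d t ^ (1 - β)))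
    (α : ℝ) (hα0 : 0 < α) (hα1 : α < 1)
    (x πh r : Fin n → ℝ)
    (hinv : πh + α • r = α • x + (1 - α) • (P.mulVec πh))
    (u : Fin n) (y : ℝ) (hy : y = r u)
    (πh' r' : Fin n → ℝ)
    (hπh' : πh' = πh + (α * y) • (Pi.single u 1 : Fin n → ℝ))
    (hr' : r' = r - y • (Pi.single u 1 : Fin n → ℝ)
        + ((1 - α) * y) • (P.mulVec ((Pi.single u 1 : Fin n → ℝ)))) :
    (πh' + α • r' = α • x + (1 - α) • (P.mulVec πh')) ∧
    ((0 : Fin n → ℝ) + α • x = α • x + (1 - α) • (P.mulVec (0 : Fin n → ℝ))) :=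
  push_preserves_invariant_general P α x πh r hinv u y πh' r' hπh' hr'
end

section
/- Error bound for the approximate propagation vector (Error Analysis theorem): Let ε > 0, x ∈ ℝ^n, and let π = ∑_{ℓ=0}^∞ α(1−α)^ℓ P^ℓ x be the exact propagation vector. Suppose π̂, r ∈ ℝ^n satisfy π = π̂ + α·(I − (1−α)P)^{−1}·r, and |r(t)| ≤ ε·d(t)^{1−β} for every node t ∈ V. Then |π̂(s) − π(s)| ≤ ε·d(s)^{1−β} for every node s ∈ V. -/
/-!
Write `w t = d t ^ (1 - β)`. The propagation matrix `P` is entrywise nonnegative and fixes `w`,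
so it does not increase the weighted sup norm `max_t |y t| / w t`. The correction
`y = (I - (1 - α) P)⁻¹ r` solves `y = r + (1 - α) P y`, so `‖y‖_w ≤ ‖r‖_w + (1 - α) ‖y‖_w`,
i.e. `α ‖y‖_w ≤ ‖r‖_w ≤ ε`; and `π̂ - π = -α y`.
-/

open Matrix

section WeightedSupNorm

variable {ι : Type*} [Fintype ι] {P : Matrix ι ι ℝ} {w y : ι → ℝ}

theorem abs_mulVec_le_of_abs_le_mul_fixedVec (hP : ∀ s t, 0 ≤ P s t) (hPw : P *ᵥ w = w)
    {K : ℝ} (hy : ∀ t, |y t| ≤ K * w t) (s : ι) : |(P *ᵥ y) s| ≤ K * w s :=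
  calc |(P *ᵥ y) s| ≤ ∑ t, |P s t * y t| := Finset.abs_sum_le_sum_abs _ _
    _ ≤ ∑ t, P s t * (K * w t) := Finset.sum_le_sum fun t _ => by
          rw [abs_mul, abs_of_nonneg (hP s t)]
          exact mul_le_mul_of_nonneg_left (hy t) (hP s t)
    _ = K * (P *ᵥ w) s := by
          rw [mulVec, dotProduct, Finset.mul_sum]
          exact Finset.sum_congr rfl fun t _ => by ring
    _ = K * w s := by rw [hPw]

theorem mul_abs_le_of_eq_add_smul_mulVec (hw : ∀ t, 0 < w t) (hP : ∀ s t, 0 ≤ P s t)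
    (hPw : P *ᵥ w = w) {α ε : ℝ} (hα0 : 0 ≤ α) (hα1 : α ≤ 1) {r : ι → ℝ}
    (hr : ∀ t, |r t| ≤ ε * w t) (hyr : y = r + (1 - α) • P *ᵥ y) (s : ι) :
    α * |y s| ≤ ε * w s := by
  have : Nonempty ι := ⟨s⟩
  obtain ⟨s₀, hs₀⟩ := Finite.exists_max fun t => |y t| / w t
  set K := |y s₀| / w s₀
  have hyK : ∀ t, |y t| ≤ K * w t := fun t => (div_le_iff₀ (hw t)).mp (hs₀ t)
  have hKw : K * w s₀ = |y s₀| := div_mul_cancel₀ _ (hw s₀).ne'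
  have hstep : K * w s₀ ≤ ε * w s₀ + (1 - α) * (K * w s₀) :=
    calc K * w s₀ = |y s₀| := hKw
      _ = |r s₀ + (1 - α) * (P *ᵥ y) s₀| := congrArg abs (congrFun hyr s₀)
      _ ≤ |r s₀| + |(1 - α) * (P *ᵥ y) s₀| := abs_add_le _ _
      _ = |r s₀| + (1 - α) * |(P *ᵥ y) s₀| := by
          rw [abs_mul, abs_of_nonneg (sub_nonneg.mpr hα1)]
      _ ≤ ε * w s₀ + (1 - α) * (K * w s₀) :=
          add_le_add (hr s₀) (mul_le_mul_of_nonneg_left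
            (abs_mulVec_le_of_abs_le_mul_fixedVec hP hPw hyK s₀) (sub_nonneg.mpr hα1))
  have hαK : α * K ≤ ε := le_of_mul_le_mul_right (by linarith) (hw s₀)
  calc α * |y s| ≤ α * (K * w s) := mul_le_mul_of_nonneg_left (hyK s) hα0
    _ = α * K * w s := by ring
    _ ≤ ε * w s := mul_le_mul_of_nonneg_right hαK (hw s).le

end WeightedSupNorm

theorem mulVec_rpow_degree_eq {ι : Type*} [Fintype ι] {A P : Matrix ι ι ℝ} {d : ι → ℝ}
    (hd : ∀ s, d s = ∑ t, A s t) (hdpos : ∀ s, 0 < d s) {β : ℝ}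
    (hP : ∀ s t, P s t = A s t / (d s ^ β * d t ^ (1 - β))) :
    P *ᵥ (fun t => d t ^ (1 - β)) = fun t => d t ^ (1 - β) := by
  ext s
  have hterm : ∀ t, P s t * d t ^ (1 - β) = A s t / d s ^ β := fun t => by
    rw [hP, ← div_div, div_mul_cancel₀ _ (Real.rpow_pos_of_pos (hdpos t) _).ne']
  simp only [mulVec, dotProduct, hterm]
  rw [← Finset.sum_div, ← hd, Real.rpow_sub (hdpos s), Real.rpow_one]

theorem eq_add_smul_mulVec_of_isUnit {ι : Type*} [Fintype ι] [DecidableEq ι]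
    {P : Matrix ι ι ℝ} {c : ℝ} (hunit : IsUnit (1 - c • P)) (r : ι → ℝ) :
    (1 - c • P)⁻¹ *ᵥ r = r + c • P *ᵥ ((1 - c • P)⁻¹ *ᵥ r) := by
  have hMy : (1 - c • P) *ᵥ ((1 - c • P)⁻¹ *ᵥ r) = r := by
    rw [mulVec_mulVec, mul_nonsing_inv _ ((isUnit_iff_isUnit_det _).mp hunit), one_mulVec]
  rw [sub_mulVec, one_mulVec, smul_mulVec] at hMy
  exact eq_add_of_sub_eq hMy

theorem approx_propagation_error_bound_general {n : ℕ}
    (A : Matrix (Fin n) (Fin n) ℝ)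
    (hA01 : ∀ s t, A s t = 0 ∨ A s t = 1)
    (d : Fin n → ℝ) (hd : ∀ s, d s = ∑ t, A s t) (hd1 : ∀ s, 1 ≤ d s)
    (β : ℝ)
    (P : Matrix (Fin n) (Fin n) ℝ)
    (hP : ∀ s t, P s t = A s t / (d s ^ β * d t ^ (1 - β)))
    (α : ℝ) (hα0 : 0 < α) (hα1 : α < 1)
    (ε : ℝ)
    (π πh r : Fin n → ℝ)
    (hunit : IsUnit (1 - (1 - α) • P))
    (hinv2 : π = πh + α • ((1 - (1 - α) • P)⁻¹.mulVec r))
    (hr : ∀ t, |r t| ≤ ε * d t ^ (1 - β)) :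
    ∀ s, |πh s - π s| ≤ ε * d s ^ (1 - β) := by
  have hdpos : ∀ s, 0 < d s := fun s => one_pos.trans_le (hd1 s)
  have hPnonneg : ∀ s t, 0 ≤ P s t := fun s t => by
    rw [hP]
    have := hdpos s
    have := hdpos t
    rcases hA01 s t with h | h <;> rw [h] <;> positivity
  intro s
  have hdiff : πh s - π s = -(α * ((1 - (1 - α) • P)⁻¹ *ᵥ r) s) := by
    rw [hinv2, Pi.add_apply, Pi.smul_apply, smul_eq_mul]; ring
  rw [hdiff, abs_neg, abs_mul, abs_of_pos hα0]
  exact mul_abs_le_of_eq_add_smul_mulVec (fun t => Real.rpow_pos_of_pos (hdpos t) _) hPnonneg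
    (mulVec_rpow_degree_eq hd hdpos hP) hα0.le hα1.le hr (eq_add_smul_mulVec_of_isUnit hunit r) s

/-- Error bound for the approximate propagation vector (Error Analysis theorem). -/
theorem approx_propagation_error_bound {n : ℕ} (hn : 1 ≤ n)
    (A : Matrix (Fin n) (Fin n) ℝ) (hA_symm : A.IsSymm)
    (hA01 : ∀ s t, A s t = 0 ∨ A s t = 1)
    (d : Fin n → ℝ) (hd : ∀ s, d s = ∑ t, A s t) (hd1 : ∀ s, 1 ≤ d s)
    (β : ℝ) (hβ0 : 0 ≤ β) (hβ1 : β ≤ 1)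
    (P : Matrix (Fin n) (Fin n) ℝ)
    (hP : ∀ s t, P s t = A s t / (d s ^ β * d t ^ (1 - β)))
    (α : ℝ) (hα0 : 0 < α) (hα1 : α < 1)
    (ε : ℝ) (hε : 0 < ε)
    (x π πh r : Fin n → ℝ)
    (hπ : HasSum (fun ℓ : ℕ => (α * (1 - α) ^ ℓ) • ((P ^ ℓ).mulVec x)) π)
    (hunit : IsUnit (1 - (1 - α) • P))
    (hinv2 : π = πh + α • ((1 - (1 - α) • P)⁻¹.mulVec r))
    (hr : ∀ t, |r t| ≤ ε * d t ^ (1 - β)) :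
    ∀ s, |πh s - π s| ≤ ε * d s ^ (1 - β) :=
  approx_propagation_error_bound_general A hA01 d hd hd1 β P hP α hα0 hα1 ε π πh r hunit hinv2 hr
end

section
/- Cost identity of Theorem 1 (initialization cost of the basic propagation algorithm): Let ε > 0 and let x ∈ ℝ^n have nonnegative entries, with exact propagation vector π = ∑_{ℓ=0}^∞ α(1−α)^ℓ P^ℓ x. Suppose π̂, r ∈ ℝ^n have nonnegative entries and satisfy the invariant π̂ + α·r = α·x + (1−α)·P·π̂. Then the quantity T_init := (1/(αε))·∑_{s∈V} d(s)^β·π̂(s) — which upper-bounds the number of elementary operations of the basic propagation algorithm producing (π̂, r) — satisfies T_init = (1/(αε))·( ‖D^β·π‖₁ − ∑_{t∈V} Φ(t)·r(t) ), where ‖D^β·π‖₁ = ∑_{s∈V} d(s)^β·|π(s)|, q(s,t) := d(s)^{1−β}·π_s(t)·d(t)^{β−1}, and Φ(t) := ∑_{s∈V} d(s)^β·q(s,t). -/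
/-!
Pair everything with the weight vector `w = (d(s)^β)_s`. By symmetry of `A` the column sums of
`A` are the degrees, so `w` is a left fixed vector of `P`. Pairing the invariant with `w` gives
`⟨w, π̂⟩ = ⟨w, x⟩ - ⟨w, r⟩`, and pairing the series for `π` with `w` gives `⟨w, π⟩ = ⟨w, x⟩`
because the weights `α(1-α)^ℓ` sum to `1`; moreover `π ≥ 0`, so `‖D^β π‖₁ = ⟨w, π⟩`.
Dually, `d` is a right fixed vector of `A D⁻¹`, whence `∑_s d(s) π_s = d` and `Φ(t) = d(t)^β`.
-/

open Matrix Finset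

namespace Matrix

variable {ι : Type*} [Fintype ι]

theorem dotProduct_eq_sub_of_propagation_invariant {α : ℝ} (hα : α ≠ 0) {P : Matrix ι ι ℝ}
    {w x r πh : ι → ℝ} (hw : w ᵥ* P = w)
    (hinv : πh + α • r = α • x + (1 - α) • (P *ᵥ πh)) : w ⬝ᵥ πh = w ⬝ᵥ x - w ⬝ᵥ r := by
  have h := congrArg (w ⬝ᵥ ·) hinv
  simp only [dotProduct_add, dotProduct_smul, dotProduct_mulVec, hw, smul_eq_mul] at h
  exact mul_left_cancel₀ hα (by linarith)

variable [DecidableEq ι] {M : Matrix ι ι ℝ}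

theorem pow_mulVec_eq_self {v : ι → ℝ} (h : M *ᵥ v = v) (ℓ : ℕ) : M ^ ℓ *ᵥ v = v := by
  induction ℓ with
  | zero => exact one_mulVec v
  | succ ℓ ih => rw [pow_succ, ← mulVec_mulVec, h, ih]

theorem vecMul_pow_eq_self {w : ι → ℝ} (h : w ᵥ* M = w) (ℓ : ℕ) : w ᵥ* M ^ ℓ = w := by
  induction ℓ with
  | zero => exact vecMul_one w
  | succ ℓ ih => rw [pow_succ, ← vecMul_vecMul, ih, h]

theorem pow_mulVec_nonneg (hM : ∀ i j, 0 ≤ M i j) {v : ι → ℝ} (hv : 0 ≤ v) (ℓ : ℕ) :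
    0 ≤ M ^ ℓ *ᵥ v := by
  induction ℓ with
  | zero => rwa [pow_zero, one_mulVec]
  | succ ℓ ih =>
    rw [pow_succ', ← mulVec_mulVec]
    exact fun i => Finset.sum_nonneg fun j _ => mul_nonneg (hM i j) (ih j)

variable {c : ℕ → ℝ}

theorem hasSum_smul_pow_mulVec_of_mulVec_eq_self (hc : HasSum c 1) {v : ι → ℝ}
    (h : M *ᵥ v = v) : HasSum (fun ℓ => c ℓ • (M ^ ℓ *ᵥ v)) v := by
  simpa only [pow_mulVec_eq_self h, one_smul] using hc.smul_const v

theorem dotProduct_eq_of_hasSum_smul_pow_mulVec (hc : HasSum c 1) {w v p : ι → ℝ}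
    (hw : w ᵥ* M = w) (hp : HasSum (fun ℓ => c ℓ • (M ^ ℓ *ᵥ v)) p) : w ⬝ᵥ p = w ⬝ᵥ v := by
  have hdot : HasSum (fun ℓ => w ⬝ᵥ (c ℓ • (M ^ ℓ *ᵥ v))) (w ⬝ᵥ p) :=
    hasSum_sum fun i _ => (Pi.hasSum.mp hp i).mul_left (w i)
  simp only [dotProduct_smul, dotProduct_mulVec, vecMul_pow_eq_self hw, smul_eq_mul] at hdot
  simpa using hdot.unique (hc.mul_right (w ⬝ᵥ v))

theorem sum_smul_eq_of_hasSum_smul_pow_mulVec_single (hc : HasSum c 1) {v : ι → ℝ}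
    (h : M *ᵥ v = v) {q : ι → ι → ℝ}
    (hq : ∀ s, HasSum (fun ℓ => c ℓ • (M ^ ℓ *ᵥ Pi.single s 1)) (q s)) :
    ∑ s, v s • q s = v := by
  have hsum := hasSum_sum fun s (_ : s ∈ univ) => (hq s).const_smul (v s)
  have hv : ∑ s, v s • (Pi.single s 1 : ι → ℝ) = v := by
    simp_rw [← Pi.single_smul', smul_eq_mul, mul_one, Finset.univ_sum_single]
  have hterm : ∀ ℓ, ∑ s, v s • c ℓ • (M ^ ℓ *ᵥ Pi.single s 1) = c ℓ • (M ^ ℓ *ᵥ v) := by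
    intro ℓ
    conv_rhs => rw [← hv, mulVec_sum, Finset.smul_sum]
    simp only [mulVec_smul, smul_comm (c ℓ)]
  simp only [hterm] at hsum
  exact hsum.unique (hasSum_smul_pow_mulVec_of_mulVec_eq_self hc h)

theorem nonneg_of_hasSum_smul_pow_mulVec (hc : ∀ ℓ, 0 ≤ c ℓ) (hM : ∀ i j, 0 ≤ M i j)
    {v p : ι → ℝ} (hv : 0 ≤ v) (hp : HasSum (fun ℓ => c ℓ • (M ^ ℓ *ᵥ v)) p) : 0 ≤ p :=
  hp.nonneg fun ℓ => smul_nonneg (hc ℓ) (pow_mulVec_nonneg hM hv ℓ)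

end Matrix

theorem hasSum_mul_one_sub_pow {α : ℝ} (h0 : 0 < α) (h2 : α < 2) :
    HasSum (fun ℓ : ℕ => α * (1 - α) ^ ℓ) 1 := by
  have hr : |1 - α| < 1 := abs_lt.mpr ⟨by linarith, by linarith⟩
  have h := (hasSum_geometric_of_abs_lt_one hr).mul_left α
  rwa [sub_sub_cancel, mul_inv_cancel₀ h0.ne'] at h

section Graph

variable {ι : Type*} [Fintype ι] {A : Matrix ι ι ℝ} {d : ι → ℝ}

theorem mul_diagonal_inv_mulVec_eq_self [DecidableEq ι] (hd : ∀ s, d s = ∑ t, A s t)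
    (hd0 : ∀ s, d s ≠ 0) : (A * diagonal fun t => (d t)⁻¹) *ᵥ d = d := by
  have hones : (diagonal fun t => (d t)⁻¹) *ᵥ d = 1 :=
    funext fun t => by rw [mulVec_diagonal, inv_mul_cancel₀ (hd0 t), Pi.one_apply]
  rw [← mulVec_mulVec, hones]
  funext s
  simp only [mulVec, dotProduct, Pi.one_apply, mul_one, hd]

theorem rpow_vecMul_eq_self (hA : A.IsSymm) (hd : ∀ s, d s = ∑ t, A s t) (hd0 : ∀ s, 0 < d s)
    {β : ℝ} {P : Matrix ι ι ℝ} (hP : ∀ s t, P s t = A s t / (d s ^ β * d t ^ (1 - β))) :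
    (fun s => d s ^ β) ᵥ* P = fun s => d s ^ β := by
  funext t
  have hcol : ∑ s, A s t = d t := by simp only [hd t, hA.apply]
  have hβ : ∀ s, d s ^ β ≠ 0 := fun s => (Real.rpow_pos_of_pos (hd0 s) β).ne'
  calc ((fun s => d s ^ β) ᵥ* P) t = (∑ s, A s t) / d t ^ (1 - β) := by
        simp only [vecMul, dotProduct, hP, Finset.sum_div]
        refine Finset.sum_congr rfl fun s _ => ?_
        field_simp [hβ s]
    _ = d t ^ β := by
        rw [hcol, Real.rpow_sub (hd0 t), Real.rpow_one]
        field_simp [hβ t, (hd0 t).ne']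

theorem sum_rpow_mul_eq_rpow_of_sum_smul_eq (hd0 : ∀ s, 0 < d s) {q : ι → ι → ℝ}
    (hq : ∑ s, d s • q s = d) {β : ℝ} (t : ι) :
    ∑ s, d s ^ β * (d s ^ (1 - β) * q s t * d t ^ (β - 1)) = d t ^ β :=
  calc ∑ s, d s ^ β * (d s ^ (1 - β) * q s t * d t ^ (β - 1))
      = d t ^ (β - 1) * (∑ s, d s • q s) t := by
        simp only [Finset.sum_apply, Pi.smul_apply, smul_eq_mul, Finset.mul_sum]
        refine Finset.sum_congr rfl fun s _ => ?_
        have hds : d s ^ β * d s ^ (1 - β) = d s := by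
          rw [← Real.rpow_add (hd0 s), add_sub_cancel, Real.rpow_one]
        linear_combination (q s t * d t ^ (β - 1)) * hds
    _ = d t ^ β := by rw [hq, Real.rpow_sub_one (hd0 t).ne', div_mul_cancel₀ _ (hd0 t).ne']

end Graph

theorem initialization_cost_identity_general {n : ℕ}
    (A : Matrix (Fin n) (Fin n) ℝ) (hA_symm : A.IsSymm)
    (hA01 : ∀ s t, A s t = 0 ∨ A s t = 1)
    (d : Fin n → ℝ) (hd : ∀ s, d s = ∑ t, A s t) (hd1 : ∀ s, 1 ≤ d s)
    (β : ℝ)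
    (P : Matrix (Fin n) (Fin n) ℝ)
    (hP : ∀ s t, P s t = A s t / (d s ^ β * d t ^ (1 - β)))
    (α : ℝ) (hα0 : 0 < α) (hα1 : α < 1)
    (ε : ℝ)
    (x : Fin n → ℝ) (hx : ∀ s, 0 ≤ x s)
    (π : Fin n → ℝ)
    (hπ : HasSum (fun ℓ : ℕ => (α * (1 - α) ^ ℓ) • ((P ^ ℓ).mulVec x)) π)
    (πh r : Fin n → ℝ)
    (hinv : πh + α • r = α • x + (1 - α) • (P.mulVec πh))
    (πs : Fin n → Fin n → ℝ)
    (hppr : ∀ s, HasSum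
      (fun ℓ : ℕ => (α * (1 - α) ^ ℓ) •
        (((A * Matrix.diagonal fun t => (d t)⁻¹) ^ ℓ).mulVec
          (Pi.single s 1 : Fin n → ℝ))) (πs s)) :
    (1 / (α * ε)) * ∑ s, d s ^ β * πh s =
      (1 / (α * ε)) * ((∑ s, d s ^ β * |π s|) -
        ∑ t, (∑ s, d s ^ β * (d s ^ (1 - β) * πs s t * d t ^ (β - 1))) * r t) := by
  have hd0 : ∀ s, 0 < d s := fun s => one_pos.trans_le (hd1 s)
  have hc := hasSum_mul_one_sub_pow hα0 (by linarith)
  have hw := rpow_vecMul_eq_self hA_symm hd hd0 hP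
  have hP0 : ∀ s t, 0 ≤ P s t := fun s t => by
    rw [hP]
    refine div_nonneg (by rcases hA01 s t with h | h <;> simp [h]) ?_
    exact mul_nonneg (Real.rpow_nonneg (hd0 s).le β) (Real.rpow_nonneg (hd0 t).le _)
  have hπ0 : 0 ≤ π := nonneg_of_hasSum_smul_pow_mulVec
    (fun ℓ => mul_nonneg hα0.le (pow_nonneg (by linarith) ℓ)) hP0 hx hπ
  have hdπs : ∑ s, d s • πs s = d := sum_smul_eq_of_hasSum_smul_pow_mulVec_single hc
    (mul_diagonal_inv_mulVec_eq_self hd fun s => (hd0 s).ne') hppr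
  have hcost := dotProduct_eq_sub_of_propagation_invariant hα0.ne' hw hinv
  rw [← dotProduct_eq_of_hasSum_smul_pow_mulVec hc hw hπ] at hcost
  simp only [dotProduct] at hcost
  simp only [sum_rpow_mul_eq_rpow_of_sum_smul_eq hd0 hdπs, abs_of_nonneg (hπ0 _), hcost]

/-- Cost identity of Theorem 1 (initialization cost of the basic propagation
algorithm): `T_init = (1/(αε)) · (‖D^β·π‖₁ − ∑_t Φ(t)·r(t))`. -/
theorem initialization_cost_identity {n : ℕ} (hn : 1 ≤ n)
    (A : Matrix (Fin n) (Fin n) ℝ) (hA_symm : A.IsSymm)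
    (hA01 : ∀ s t, A s t = 0 ∨ A s t = 1)
    (d : Fin n → ℝ) (hd : ∀ s, d s = ∑ t, A s t) (hd1 : ∀ s, 1 ≤ d s)
    (β : ℝ) (hβ0 : 0 ≤ β) (hβ1 : β ≤ 1)
    (P : Matrix (Fin n) (Fin n) ℝ)
    (hP : ∀ s t, P s t = A s t / (d s ^ β * d t ^ (1 - β)))
    (α : ℝ) (hα0 : 0 < α) (hα1 : α < 1)
    (ε : ℝ) (hε : 0 < ε)
    (x : Fin n → ℝ) (hx : ∀ s, 0 ≤ x s)
    (π : Fin n → ℝ)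
    (hπ : HasSum (fun ℓ : ℕ => (α * (1 - α) ^ ℓ) • ((P ^ ℓ).mulVec x)) π)
    (πh r : Fin n → ℝ) (hπh : ∀ s, 0 ≤ πh s) (hr : ∀ s, 0 ≤ r s)
    (hinv : πh + α • r = α • x + (1 - α) • (P.mulVec πh))
    (πs : Fin n → Fin n → ℝ)
    (hppr : ∀ s, HasSum
      (fun ℓ : ℕ => (α * (1 - α) ^ ℓ) •
        (((A * Matrix.diagonal fun t => (d t)⁻¹) ^ ℓ).mulVec
          (Pi.single s 1 : Fin n → ℝ))) (πs s)) :
    (1 / (α * ε)) * ∑ s, d s ^ β * πh s =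
      (1 / (α * ε)) * ((∑ s, d s ^ β * |π s|) -
        ∑ t, (∑ s, d s ^ β * (d s ^ (1 - β) * πs s t * d t ^ (β - 1))) * r t) :=
  initialization_cost_identity_general A hA_symm hA01 d hd hd1 β P hP α hα0 hα1 ε x hx π hπ πh r
    hinv πs hppr
end

section
/- Correctness of the edge-insertion update (Algorithm 2, InsertEdge): Suppose π̂, r, x ∈ ℝ^n satisfy the invariant π̂ + α·r = α·x + (1−α)·P·π̂. Let u ≠ v be nodes with A(u,v) = 0, and let G′ be obtained from G by inserting the undirected edge (u,v): A′ = A + e_u e_vᵀ + e_v e_uᵀ, with degrees d′(u) = d(u)+1, d′(v) = d(v)+1, d′(w) = d(w) for w ∉ {u,v}, and propagation matrix P′(s,t) = A′(s,t)/(d′(s)^β·d′(t)^{1−β}). Define Δr ∈ ℝ^n as the sum of the following contributions (a node receiving several contributions accumulates them): (i) at node u, the amount (1/α)·[ (π̂(u) + α·r(u) − α·x(u))·(d(u)^β − d′(u)^β)/d′(u)^β + (1−α)·π̂(v)/(d′(u)^β·d′(v)^{1−β}) ]; (ii) at node v, the amount (1/α)·[ (π̂(v) + α·r(v) − α·x(v))·(d(v)^β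 − d′(v)^β)/d′(v)^β + (1−α)·π̂(u)/(d′(v)^β·d′(u)^{1−β}) ]; (iii) at every node w with A(w,u) = 1, the amount (1−α)·π̂(u)/(α·d′(w)^β)·(1/d′(u)^{1−β} − 1/d(u)^{1−β}); (iv) at every node y with A(y,v) = 1, the amount (1−α)·π̂(v)/(α·d′(y)^β)·(1/d′(v)^{1−β} − 1/d(v)^{1−β}). Then the invariant holds for the updated graph with the same estimate: π̂ + α·(r + Δr) = α·x + (1−α)·P′·π̂. -/
/-!
With `w s = π s / d s ^ (1 - β)` one has `(P *ᵥ π) t = (A *ᵥ w) t / d t ^ β`. Inserting the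
edge changes `A` only at `(u, v)`, `(v, u)` and `w` only at `u` and `v`, so `(P' *ᵥ π) t` differs
from `(d t / d' t) ^ β * (P *ᵥ π) t` by explicit terms coming from the new entries and from the
columns `u`, `v`: these are the contributions (iii), (iv) and the second halves of (i), (ii).
The rescaling factor is `≠ 1` only at `t ∈ {u, v}`, where the old invariant
`(1 - α) * (P *ᵥ π) t = π t + α * r t - α * x t` turns it into the first halves of (i), (ii).
-/

open Matrix

lemma ite_eq_one_eq_mul {R : Type*} [MulZeroOneClass R] [NeZero (1 : R)] {a : R}
    [Decidable (a = 1)] (ha : a = 0 ∨ a = 1) (x : R) :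
    (if a = 1 then x else 0) = a * x := by
  rcases ha with rfl | rfl <;> simp

section

variable {ι R : Type*} [Fintype ι] [DecidableEq ι] [CommRing R]

lemma add_single_add_single_mulVec_apply (A : Matrix ι ι R) (u v : ι) (w : ι → R) (t : ι) :
    ((A + single u v 1 + single v u 1) *ᵥ w) t =
      (A *ᵥ w) t + (if t = u then w v else 0) + (if t = v then w u else 0) := by
  simp [add_mulVec, single_mulVec, Function.update_apply]

lemma mulVec_apply_of_eq_off_pair (A : Matrix ι ι R) {u v : ι} (huv : u ≠ v) {w w' : ι → R}
    (h : ∀ s, s ≠ u → s ≠ v → w' s = w s) (t : ι) :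
    (A *ᵥ w') t = (A *ᵥ w) t + A t u * (w' u - w u) + A t v * (w' v - w v) := by
  have hw' : w' = w + Pi.single u (w' u - w u) + Pi.single v (w' v - w v) := by
    funext s
    rcases eq_or_ne s u with rfl | hsu
    · simp [huv]
    rcases eq_or_ne s v with rfl | hsv
    · simp [hsu]
    · simp [hsu, hsv, h s hsu hsv]
  conv_lhs => rw [hw']
  simp [mulVec_add]

end

section

variable {ι : Type*} [Fintype ι]

noncomputable def propagationMatrix (A : Matrix ι ι ℝ) (d : ι → ℝ) (β : ℝ) :
    Matrix ι ι ℝ :=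
  of fun s t => A s t / (d s ^ β * d t ^ (1 - β))

lemma propagationMatrix_mulVec_apply (A : Matrix ι ι ℝ) (d : ι → ℝ) (β : ℝ) (π : ι → ℝ)
    (t : ι) :
    (propagationMatrix A d β *ᵥ π) t = (A *ᵥ fun s => π s / d s ^ (1 - β)) t / d t ^ β := by
  simp only [propagationMatrix, mulVec, dotProduct, of_apply, Finset.sum_div]
  refine Finset.sum_congr rfl fun s _ => ?_
  ring

lemma propagationMatrix_insertEdge_mulVec_apply [DecidableEq ι] (A : Matrix ι ι ℝ)
    {u v : ι} (huv : u ≠ v) {d d' : ι → ℝ} (hd' : ∀ s, s ≠ u → s ≠ v → d' s = d s)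
    (β : ℝ) (π : ι → ℝ) {t : ι} (hdt : 0 < d t) :
    (propagationMatrix (A + single u v 1 + single v u 1) d' β *ᵥ π) t =
      (d t ^ β * (propagationMatrix A d β *ᵥ π) t
        + A t u * π u * (1 / d' u ^ (1 - β) - 1 / d u ^ (1 - β))
        + A t v * π v * (1 / d' v ^ (1 - β) - 1 / d v ^ (1 - β))
        + (if t = u then π v / d' v ^ (1 - β) else 0)
        + (if t = v then π u / d' u ^ (1 - β) else 0)) / d' t ^ β := by
  have hw : ∀ s, s ≠ u → s ≠ v → π s / d' s ^ (1 - β) = π s / d s ^ (1 - β) :=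
    fun s hsu hsv => by rw [hd' s hsu hsv]
  rw [propagationMatrix_mulVec_apply, propagationMatrix_mulVec_apply,
    add_single_add_single_mulVec_apply, mulVec_apply_of_eq_off_pair A huv hw,
    mul_div_cancel₀ _ (Real.rpow_pos_of_pos hdt β).ne']
  ring

end

open Classical in
theorem insert_edge_update_correct_general {n : ℕ}
    (A : Matrix (Fin n) (Fin n) ℝ)
    (hA01 : ∀ s t, A s t = 0 ∨ A s t = 1)
    (d : Fin n → ℝ) (hd1 : ∀ s, 1 ≤ d s)
    (β : ℝ)
    (P : Matrix (Fin n) (Fin n) ℝ)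
    (hP : ∀ s t, P s t = A s t / (d s ^ β * d t ^ (1 - β)))
    (α : ℝ) (hα0 : 0 < α)
    (x πh r : Fin n → ℝ)
    (hinv : πh + α • r = α • x + (1 - α) • (P.mulVec πh))
    (u v : Fin n) (huv : u ≠ v)
    (A' : Matrix (Fin n) (Fin n) ℝ)
    (hA' : A' = A + Matrix.single u v 1 + Matrix.single v u 1)
    (d' : Fin n → ℝ)
    (hd'u : d' u = d u + 1) (hd'v : d' v = d v + 1)
    (hd'w : ∀ w, w ≠ u → w ≠ v → d' w = d w)
    (P' : Matrix (Fin n) (Fin n) ℝ)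
    (hP' : ∀ s t, P' s t = A' s t / (d' s ^ β * d' t ^ (1 - β)))
    (Δr : Fin n → ℝ)
    (hΔr : ∀ t, Δr t =
      (if t = u then
        (1 / α) * ((πh u + α * r u - α * x u) * (d u ^ β - d' u ^ β) / d' u ^ β
          + (1 - α) * πh v / (d' u ^ β * d' v ^ (1 - β)))
       else 0)
      + (if t = v then
        (1 / α) * ((πh v + α * r v - α * x v) * (d v ^ β - d' v ^ β) / d' v ^ β
          + (1 - α) * πh u / (d' v ^ β * d' u ^ (1 - β)))
       else 0)
      + (if A t u = 1 then
          (1 - α) * πh u / (α * d' t ^ β)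
            * (1 / d' u ^ (1 - β) - 1 / d u ^ (1 - β))
         else 0)
      + (if A t v = 1 then
          (1 - α) * πh v / (α * d' t ^ β)
            * (1 / d' v ^ (1 - β) - 1 / d v ^ (1 - β))
         else 0)) :
    πh + α • (r + Δr) = α • x + (1 - α) • (P'.mulVec πh) := by
  have hd : ∀ s, 0 < d s := fun s => one_pos.trans_le (hd1 s)
  obtain rfl : P = propagationMatrix A d β := Matrix.ext hP
  obtain rfl : P' = propagationMatrix A' d' β := Matrix.ext hP'
  subst hA'
  funext t
  have hinvt := congrFun hinv t
  simp only [Pi.add_apply, Pi.smul_apply, smul_eq_mul] at hinvt ⊢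
  rw [hΔr, ite_eq_one_eq_mul (hA01 t u), ite_eq_one_eq_mul (hA01 t v),
    propagationMatrix_insertEdge_mulVec_apply A huv hd'w β πh (hd t)]
  have hα : α ≠ 0 := hα0.ne'
  have hd' : ∀ s, 0 < d' s := fun s => by
    rcases eq_or_ne s u with rfl | hsu
    · linarith [hd s]
    rcases eq_or_ne s v with rfl | hsv
    · linarith [hd s]
    · rw [hd'w s hsu hsv]; exact hd s
  have hd't : d' t ^ β ≠ 0 := (Real.rpow_pos_of_pos (hd' t) β).ne'
  rcases eq_or_ne t u with rfl | htu
  · simp only [if_true, if_neg huv]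
    linear_combination (norm := skip) (d t ^ β / d' t ^ β) * hinvt
    field_simp
    ring
  rcases eq_or_ne t v with rfl | htv
  · simp only [if_true, if_neg htu]
    linear_combination (norm := skip) (d t ^ β / d' t ^ β) * hinvt
    field_simp
    ring
  · simp only [if_neg htu, if_neg htv]
    rw [hd'w t htu htv] at hd't ⊢
    linear_combination (norm := skip) hinvt
    field_simp
    ring

open Classical in
/-- Correctness of the edge-insertion update (Algorithm 2, InsertEdge):
after inserting the undirected edge (u,v) and adding the prescribed residual
increments `Δr`, the propagation invariant holds for the updated graph with
the same estimate vector. -/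
theorem insert_edge_update_correct {n : ℕ} (hn : 1 ≤ n)
    (A : Matrix (Fin n) (Fin n) ℝ) (hA_symm : A.IsSymm)
    (hA01 : ∀ s t, A s t = 0 ∨ A s t = 1)
    (d : Fin n → ℝ) (hd : ∀ s, d s = ∑ t, A s t) (hd1 : ∀ s, 1 ≤ d s)
    (β : ℝ) (hβ0 : 0 ≤ β) (hβ1 : β ≤ 1)
    (P : Matrix (Fin n) (Fin n) ℝ)
    (hP : ∀ s t, P s t = A s t / (d s ^ β * d t ^ (1 - β)))
    (α : ℝ) (hα0 : 0 < α) (hα1 : α < 1)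
    (x πh r : Fin n → ℝ)
    (hinv : πh + α • r = α • x + (1 - α) • (P.mulVec πh))
    (u v : Fin n) (huv : u ≠ v) (hAuv : A u v = 0)
    (A' : Matrix (Fin n) (Fin n) ℝ)
    (hA' : A' = A + Matrix.single u v 1 + Matrix.single v u 1)
    (d' : Fin n → ℝ)
    (hd'u : d' u = d u + 1) (hd'v : d' v = d v + 1)
    (hd'w : ∀ w, w ≠ u → w ≠ v → d' w = d w)
    (P' : Matrix (Fin n) (Fin n) ℝ)
    (hP' : ∀ s t, P' s t = A' s t / (d' s ^ β * d' t ^ (1 - β)))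
    (Δr : Fin n → ℝ)
    (hΔr : ∀ t, Δr t =
      (if t = u then
        (1 / α) * ((πh u + α * r u - α * x u) * (d u ^ β - d' u ^ β) / d' u ^ β
          + (1 - α) * πh v / (d' u ^ β * d' v ^ (1 - β)))
       else 0)
      + (if t = v then
        (1 / α) * ((πh v + α * r v - α * x v) * (d v ^ β - d' v ^ β) / d' v ^ β
          + (1 - α) * πh u / (d' v ^ β * d' u ^ (1 - β)))
       else 0)
      + (if A t u = 1 then
          (1 - α) * πh u / (α * d' t ^ β)
            * (1 / d' u ^ (1 - β) - 1 / d u ^ (1 - β))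
         else 0)
      + (if A t v = 1 then
          (1 - α) * πh v / (α * d' t ^ β)
            * (1 / d' v ^ (1 - β) - 1 / d v ^ (1 - β))
         else 0)) :
    πh + α • (r + Δr) = α • x + (1 - α) • (P'.mulVec πh) :=
  insert_edge_update_correct_general A hA01 d hd1 β P hP α hα0 x πh r hinv u v huv A' hA' d' hd'u
    hd'v hd'w P' hP' Δr hΔr
end

section
/- Correctness of the edge-deletion update (Algorithm 2, DeleteEdge): Suppose π̂, r, x ∈ ℝ^n satisfy the invariant π̂ + α·r = α·x + (1−α)·P·π̂. Let u ≠ v be nodes with A(u,v) = 1 and d(u) ≥ 2, d(v) ≥ 2, and let G′ be obtained from G by deleting the undirected edge (u,v): A′ = A − e_u e_vᵀ − e_v e_uᵀ, with degrees d′(u) = d(u)−1, d′(v) = d(v)−1, d′(w) = d(w) for w ∉ {u,v}, and propagation matrix P′(s,t) = A′(s,t)/(d′(s)^β·d′(t)^{1−β}). Define Δr ∈ ℝ^n as the sum of the following contributions (a node receiving several contributions accumulates them): (i) at node u, the amount (1/α)·[ (π̂(u) + α·r(u) − α·x(u))·(d(u)^β − d′(u)^β)/d′(u)^β − (1−α)·π̂(v)/(d′(u)^β·d′(v)^{1−β})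 ]; (ii) at node v, the amount (1/α)·[ (π̂(v) + α·r(v) − α·x(v))·(d(v)^β − d′(v)^β)/d′(v)^β − (1−α)·π̂(u)/(d′(v)^β·d′(u)^{1−β}) ]; (iii) at every node w with A(w,u) = 1 (in the original graph G, including w = v and possible self-loops), the amount (1−α)·π̂(u)/(α·d′(w)^β)·(1/d′(u)^{1−β} − 1/d(u)^{1−β}); (iv) at every node y with A(y,v) = 1 (in G), the amount (1−α)·π̂(v)/(α·d′(y)^β)·(1/d′(v)^{1−β} − 1/d(v)^{1−β}). Then π̂ + α·(r + Δr) = α·x + (1−α)·P′·π̂. -/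
/-!
Write `w = π̂ / d ^ (1 - β)` and `w' = π̂ / d' ^ (1 - β)`, so that `d t ^ β * (P π̂) t = (A w) t`
and `d' t ^ β * (P' π̂) t = (A' w') t`. Deleting the edge subtracts `w' v` from row `u` and `w' u`
from row `v` of `A w'`, and since `w'` differs from `w` only at `u` and `v`,
`(A w') t = (A w) t + A t u * (w' u - w u) + A t v * (w' v - w v)`. These give contributions
(iii), (iv) and the second halves of (i), (ii). What remains is the rescaling of rows `u` and `v`
by `d ^ β / d' ^ β`, which the invariant `(1 - α) * (P π̂) u = π̂ u + α * r u - α * x u` turns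
into the first halves of (i) and (ii).
-/

open Matrix

lemma eq_add_single_add_single {ι M : Type*} [DecidableEq ι] [AddCommGroup M] {f g : ι → M}
    {u v : ι} (huv : u ≠ v) (h : ∀ w, w ≠ u → w ≠ v → g w = f w) :
    g = f + Pi.single u (g u - f u) + Pi.single v (g v - f v) := by
  funext t
  rcases eq_or_ne t u with rfl | htu
  · simp [huv]
  rcases eq_or_ne t v with rfl | htv
  · simp [htu]
  simp [htu, htv, h t htu htv]

section
variable {ι : Type*} [Fintype ι]

lemma mulVec_apply_eq_of_apply_eq_div {A P : Matrix ι ι ℝ} {d : ι → ℝ} {β : ℝ}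
    (hP : ∀ s t, P s t = A s t / (d s ^ β * d t ^ (1 - β))) (x : ι → ℝ) (t : ι) :
    (P *ᵥ x) t = (A *ᵥ fun s => x s / d s ^ (1 - β)) t / d t ^ β := by
  simp only [mulVec, dotProduct, hP, Finset.sum_div]
  exact Finset.sum_congr rfl fun s _ => by ring

variable [DecidableEq ι]

lemma sub_single_sub_single_mulVec {R : Type*} [Ring R] (A : Matrix ι ι R) (u v : ι)
    (w : ι → R) :
    (A - single u v 1 - single v u 1) *ᵥ w = A *ᵥ w - Pi.single u (w v) - Pi.single v (w u) := by
  ext t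
  simp [sub_mulVec, single_mulVec, Function.update_apply, Pi.single_apply]

lemma mulVec_apply_eq_add_of_eq_off {R : Type*} [Ring R] (A : Matrix ι ι R) {f g : ι → R}
    {u v : ι} (huv : u ≠ v) (h : ∀ w, w ≠ u → w ≠ v → g w = f w) (t : ι) :
    (A *ᵥ g) t = (A *ᵥ f) t + A t u * (g u - f u) + A t v * (g v - f v) := by
  calc (A *ᵥ g) t = (A *ᵥ (f + Pi.single u (g u - f u) + Pi.single v (g v - f v))) t := by
        rw [← eq_add_single_add_single huv h]
    _ = _ := by simp [mulVec_add]

lemma mulVec_apply_of_deleteEdge {A P A' P' : Matrix ι ι ℝ} {d d' : ι → ℝ} {β : ℝ} {u v : ι}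
    (hP : ∀ s t, P s t = A s t / (d s ^ β * d t ^ (1 - β)))
    (hP' : ∀ s t, P' s t = A' s t / (d' s ^ β * d' t ^ (1 - β)))
    (hA' : A' = A - single u v 1 - single v u 1) (huv : u ≠ v)
    (hd'w : ∀ w, w ≠ u → w ≠ v → d' w = d w) (x : ι → ℝ) {t : ι} (ht : 0 < d t) :
    (P' *ᵥ x) t = (d t ^ β * (P *ᵥ x) t
      + A t u * (x u / d' u ^ (1 - β) - x u / d u ^ (1 - β))
      + A t v * (x v / d' v ^ (1 - β) - x v / d v ^ (1 - β))
      - (if t = u then x v / d' v ^ (1 - β) else 0)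
      - (if t = v then x u / d' u ^ (1 - β) else 0)) / d' t ^ β := by
  have hw : ∀ s, s ≠ u → s ≠ v → x s / d' s ^ (1 - β) = x s / d s ^ (1 - β) :=
    fun s hsu hsv => by rw [hd'w s hsu hsv]
  rw [mulVec_apply_eq_of_apply_eq_div hP', hA', sub_single_sub_single_mulVec, Pi.sub_apply,
    Pi.sub_apply, mulVec_apply_eq_add_of_eq_off A huv hw, mulVec_apply_eq_of_apply_eq_div hP,
    mul_div_cancel₀ _ (Real.rpow_pos_of_pos ht β).ne']
  simp only [Pi.single_apply]

end

open Classical in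
theorem delete_edge_update_correct_general {n : ℕ}
    (A : Matrix (Fin n) (Fin n) ℝ)
    (hA01 : ∀ s t, A s t = 0 ∨ A s t = 1)
    (d : Fin n → ℝ) (hd1 : ∀ s, 1 ≤ d s)
    (β : ℝ)
    (P : Matrix (Fin n) (Fin n) ℝ)
    (hP : ∀ s t, P s t = A s t / (d s ^ β * d t ^ (1 - β)))
    (α : ℝ) (hα0 : 0 < α)
    (x πh r : Fin n → ℝ)
    (hinv : πh + α • r = α • x + (1 - α) • (P.mulVec πh))
    (u v : Fin n) (huv : u ≠ v)
    (hdu2 : 2 ≤ d u) (hdv2 : 2 ≤ d v)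
    (A' : Matrix (Fin n) (Fin n) ℝ)
    (hA' : A' = A - Matrix.single u v 1 - Matrix.single v u 1)
    (d' : Fin n → ℝ)
    (hd'u : d' u = d u - 1) (hd'v : d' v = d v - 1)
    (hd'w : ∀ w, w ≠ u → w ≠ v → d' w = d w)
    (P' : Matrix (Fin n) (Fin n) ℝ)
    (hP' : ∀ s t, P' s t = A' s t / (d' s ^ β * d' t ^ (1 - β)))
    (Δr : Fin n → ℝ)
    (hΔr : ∀ t, Δr t =
      (if t = u then
        (1 / α) * ((πh u + α * r u - α * x u) * (d u ^ β - d' u ^ β) / d' u ^ β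
          - (1 - α) * πh v / (d' u ^ β * d' v ^ (1 - β)))
       else 0)
      + (if t = v then
        (1 / α) * ((πh v + α * r v - α * x v) * (d v ^ β - d' v ^ β) / d' v ^ β
          - (1 - α) * πh u / (d' v ^ β * d' u ^ (1 - β)))
       else 0)
      + (if A t u = 1 then
          (1 - α) * πh u / (α * d' t ^ β)
            * (1 / d' u ^ (1 - β) - 1 / d u ^ (1 - β))
         else 0)
      + (if A t v = 1 then
          (1 - α) * πh v / (α * d' t ^ β)
            * (1 / d' v ^ (1 - β) - 1 / d v ^ (1 - β))
         else 0)) :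
    πh + α • (r + Δr) = α • x + (1 - α) • (P'.mulVec πh) := by
  have hd_pos : ∀ s, 0 < d s := fun s => one_pos.trans_le (hd1 s)
  have hd'_pos : ∀ s, 0 < d' s := fun s => by
    rcases eq_or_ne s u with rfl | hsu
    · linarith
    rcases eq_or_ne s v with rfl | hsv
    · linarith
    rw [hd'w s hsu hsv]; exact hd_pos s
  have hres : ∀ s, πh s + α * r s - α * x s = (1 - α) * (P *ᵥ πh) s := fun s => by
    have h := congrFun hinv s
    simp only [Pi.add_apply, Pi.smul_apply, smul_eq_mul] at h
    linear_combination h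
  have hupdate : ∀ t, α * Δr t = (1 - α) * ((P' *ᵥ πh) t - (P *ᵥ πh) t) := fun t => by
    rw [hΔr t, ite_eq_one_eq_mul (hA01 t u), ite_eq_one_eq_mul (hA01 t v), hres u, hres v,
      mulVec_apply_of_deleteEdge hP hP' hA' huv hd'w πh (hd_pos t)]
    -- `field_simp` derives the nonvanishing of the powers from these
    have := hd_pos t; have := hd_pos u; have := hd_pos v
    have := hd'_pos t; have := hd'_pos u; have := hd'_pos v
    rcases eq_or_ne t u with rfl | htu
    · simp only [if_pos, if_neg huv]; field_simp; ring
    rcases eq_or_ne t v with rfl | htv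
    · simp only [if_pos, if_neg htu]; field_simp; ring
    · simp only [if_neg htu, if_neg htv, hd'w t htu htv]; field_simp; ring
  funext t
  simp only [Pi.add_apply, Pi.smul_apply, smul_eq_mul]
  linear_combination hres t + hupdate t

open Classical in
/-- Correctness of the edge-deletion update (Algorithm 2, DeleteEdge):
after deleting the undirected edge (u,v) and adding the prescribed residual
increments `Δr`, the propagation invariant holds for the updated graph with
the same estimate vector. -/
theorem delete_edge_update_correct {n : ℕ} (hn : 1 ≤ n)
    (A : Matrix (Fin n) (Fin n) ℝ) (hA_symm : A.IsSymm)
    (hA01 : ∀ s t, A s t = 0 ∨ A s t = 1)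
    (d : Fin n → ℝ) (hd : ∀ s, d s = ∑ t, A s t) (hd1 : ∀ s, 1 ≤ d s)
    (β : ℝ) (hβ0 : 0 ≤ β) (hβ1 : β ≤ 1)
    (P : Matrix (Fin n) (Fin n) ℝ)
    (hP : ∀ s t, P s t = A s t / (d s ^ β * d t ^ (1 - β)))
    (α : ℝ) (hα0 : 0 < α) (hα1 : α < 1)
    (x πh r : Fin n → ℝ)
    (hinv : πh + α • r = α • x + (1 - α) • (P.mulVec πh))
    (u v : Fin n) (huv : u ≠ v) (hAuv : A u v = 1)
    (hdu2 : 2 ≤ d u) (hdv2 : 2 ≤ d v)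
    (A' : Matrix (Fin n) (Fin n) ℝ)
    (hA' : A' = A - Matrix.single u v 1 - Matrix.single v u 1)
    (d' : Fin n → ℝ)
    (hd'u : d' u = d u - 1) (hd'v : d' v = d v - 1)
    (hd'w : ∀ w, w ≠ u → w ≠ v → d' w = d w)
    (P' : Matrix (Fin n) (Fin n) ℝ)
    (hP' : ∀ s t, P' s t = A' s t / (d' s ^ β * d' t ^ (1 - β)))
    (Δr : Fin n → ℝ)
    (hΔr : ∀ t, Δr t =
      (if t = u then
        (1 / α) * ((πh u + α * r u - α * x u) * (d u ^ β - d' u ^ β) / d' u ^ β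
          - (1 - α) * πh v / (d' u ^ β * d' v ^ (1 - β)))
       else 0)
      + (if t = v then
        (1 / α) * ((πh v + α * r v - α * x v) * (d v ^ β - d' v ^ β) / d' v ^ β
          - (1 - α) * πh u / (d' v ^ β * d' u ^ (1 - β)))
       else 0)
      + (if A t u = 1 then
          (1 - α) * πh u / (α * d' t ^ β)
            * (1 / d' u ^ (1 - β) - 1 / d u ^ (1 - β))
         else 0)
      + (if A t v = 1 then
          (1 - α) * πh v / (α * d' t ^ β)
            * (1 / d' v ^ (1 - β) - 1 / d v ^ (1 - β))
         else 0)) :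
    πh + α • (r + Δr) = α • x + (1 - α) • (P'.mulVec πh) :=
  delete_edge_update_correct_general A hA01 d hd1 β P hP α hα0 x πh r hinv u v huv hdu2 hdv2 A' hA'
    d' hd'u hd'v hd'w P' hP' Δr hΔr
end

section
/- Proposition 2 (PPR degree reversibility on undirected graphs): For all nodes s, t ∈ V, d(s)·π_s(t) = d(t)·π_t(s). -/
/-! Writing `P = A D⁻¹` for the random-walk matrix, `D` conjugates `D⁻¹ A` into `P`, so
`Pˡ D = D (D⁻¹ A)ˡ = (Pˡ D)ᵀ` when `A` is symmetric. Hence every term of the PPR series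
satisfies detailed balance `d(s) Pˡ(t, s) = d(t) Pˡ(s, t)`, and so do the sums. -/

open Matrix

namespace Matrix

variable {ι K : Type*} [Fintype ι] [DecidableEq ι] [Field K]

theorem IsSymm.mul_diagonal_inv_pow_mul_diagonal {A : Matrix ι ι K} (hA : A.IsSymm)
    {d : ι → K} (hd : ∀ i, d i ≠ 0) (ℓ : ℕ) :
    ((A * diagonal fun i => (d i)⁻¹) ^ ℓ * diagonal d).IsSymm := by
  have hleft : diagonal (fun i => (d i)⁻¹) * diagonal d = 1 := by
    rw [diagonal_mul_diagonal, ← diagonal_one]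
    exact congrArg diagonal (funext fun i => inv_mul_cancel₀ (hd i))
  have hright : diagonal d * diagonal (fun i => (d i)⁻¹) = 1 := by
    rw [diagonal_mul_diagonal, ← diagonal_one]
    exact congrArg diagonal (funext fun i => mul_inv_cancel₀ (hd i))
  have hconj : SemiconjBy (diagonal d) (diagonal (fun i => (d i)⁻¹) * A)
      (A * diagonal fun i => (d i)⁻¹) := by
    rw [SemiconjBy, ← Matrix.mul_assoc, hright, Matrix.one_mul, Matrix.mul_assoc, hleft,
      Matrix.mul_one]
  have htranspose : ((A * diagonal fun i => (d i)⁻¹) ^ ℓ)ᵀ =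
      (diagonal (fun i => (d i)⁻¹) * A) ^ ℓ := by
    rw [transpose_pow, transpose_mul, diagonal_transpose, hA.eq]
  rw [IsSymm, transpose_mul, diagonal_transpose, htranspose, (hconj.pow_right ℓ).eq]

theorem IsSymm.mul_diagonal_inv_pow_detailed_balance {A : Matrix ι ι K} (hA : A.IsSymm)
    {d : ι → K} (hd : ∀ i, d i ≠ 0) (ℓ : ℕ) (s t : ι) :
    d s * ((A * diagonal fun i => (d i)⁻¹) ^ ℓ) t s =
      d t * ((A * diagonal fun i => (d i)⁻¹) ^ ℓ) s t := by
  have h := (hA.mul_diagonal_inv_pow_mul_diagonal hd ℓ).apply s t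
  rw [mul_diagonal, mul_diagonal] at h
  rw [mul_comm, h, mul_comm]

end Matrix

theorem hasSum_apply_of_hasSum_smul_mulVec_single {ι R : Type*} [Fintype ι] [DecidableEq ι]
    [NonAssocSemiring R] [TopologicalSpace R] {c : ℕ → R} {B : ℕ → Matrix ι ι R}
    {s : ι} {v : ι → R} (h : HasSum (fun ℓ => c ℓ • B ℓ *ᵥ Pi.single s 1) v) (t : ι) :
    HasSum (fun ℓ => c ℓ * B ℓ t s) (v t) := by
  simpa only [mulVec_single_one, Pi.smul_apply, col_apply, smul_eq_mul] using
    Pi.hasSum.mp h t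

theorem ppr_degree_reversibility_general {n : ℕ}
    (A : Matrix (Fin n) (Fin n) ℝ) (hA_symm : A.IsSymm)
    (d : Fin n → ℝ) (hd1 : ∀ s, 1 ≤ d s)
    (α : ℝ)
    (πs : Fin n → Fin n → ℝ)
    (hppr : ∀ s, HasSum (fun ℓ : ℕ => (α * (1 - α) ^ ℓ) •
      (((A * Matrix.diagonal fun t => (d t)⁻¹) ^ ℓ).mulVec
        (Pi.single s 1 : Fin n → ℝ))) (πs s)) :
    ∀ s t : Fin n, d s * πs s t = d t * πs t s := by
  intro s t
  have hd : ∀ s, d s ≠ 0 := fun s => (zero_lt_one.trans_le (hd1 s)).ne'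
  have hst := (hasSum_apply_of_hasSum_smul_mulVec_single (hppr s) t).mul_left (d s)
  have hts := (hasSum_apply_of_hasSum_smul_mulVec_single (hppr t) s).mul_left (d t)
  refine hst.unique (hts.congr_fun fun ℓ => ?_)
  rw [mul_left_comm, hA_symm.mul_diagonal_inv_pow_detailed_balance hd ℓ s t, mul_left_comm]

/-- Proposition 2 (PPR degree reversibility on undirected graphs):
`d(s)·π_s(t) = d(t)·π_t(s)` for all nodes `s, t`. -/
theorem ppr_degree_reversibility {n : ℕ} (hn : 1 ≤ n)
    (A : Matrix (Fin n) (Fin n) ℝ) (hA_symm : A.IsSymm)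
    (hA01 : ∀ s t, A s t = 0 ∨ A s t = 1)
    (d : Fin n → ℝ) (hd : ∀ s, d s = ∑ t, A s t) (hd1 : ∀ s, 1 ≤ d s)
    (α : ℝ) (hα0 : 0 < α) (hα1 : α < 1)
    (πs : Fin n → Fin n → ℝ)
    (hppr : ∀ s, HasSum (fun ℓ : ℕ => (α * (1 - α) ^ ℓ) •
      (((A * Matrix.diagonal fun t => (d t)⁻¹) ^ ℓ).mulVec
        (Pi.single s 1 : Fin n → ℝ))) (πs s)) :
    ∀ s t : Fin n, d s * πs s t = d t * πs t s :=
  ppr_degree_reversibility_general A hA_symm d hd1 α πs hppr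
end

section
/- Degree-weighted mass conservation under the invariant: If π̂, r, x ∈ ℝ^n satisfy the invariant π̂ + α·r = α·x + (1−α)·P·π̂, then ∑_{s∈V} d(s)^β·π̂(s) = ∑_{s∈V} d(s)^β·(x(s) − r(s)). In particular, any vector π satisfying π = α·x + (1−α)·P·π satisfies ∑_{s∈V} d(s)^β·π(s) = ∑_{s∈V} d(s)^β·x(s). -/
/-!
The row vector `w = (d(s)^β)_s` is a left fixed vector of `P`: by the symmetry of `A`, column `t`
of `P` weighted by `w` sums to `d(t) / d(t)^(1-β) = d(t)^β`. Pairing the invariant with `w` thus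
turns `P π̂` into `π̂`, leaving `α ⟪w, π̂⟫ = α ⟪w, x - r⟫`, and `α ≠ 0` can be cancelled.
-/

namespace Matrix

variable {ι K : Type*} [Fintype ι]

theorem rpow_vecMul_eq_self_of_isSymm {A P : Matrix ι ι ℝ} (hA : A.IsSymm)
    {d : ι → ℝ} (hd : ∀ s, d s = ∑ t, A s t) (hd_pos : ∀ s, 0 < d s) {β : ℝ}
    (hP : ∀ s t, P s t = A s t / (d s ^ β * d t ^ (1 - β))) :
    (fun s => d s ^ β) ᵥ* P = fun s => d s ^ β := by
  funext t
  have hcol : ∑ s, A s t = d t := by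
    rw [hd t]
    exact Finset.sum_congr rfl fun s _ => hA.apply t s
  have hsplit : d t ^ β * d t ^ (1 - β) = d t := by
    rw [← Real.rpow_add (hd_pos t), add_sub_cancel, Real.rpow_one]
  have hβ_ne : ∀ s, d s ^ β ≠ 0 := fun s => (Real.rpow_pos_of_pos (hd_pos s) β).ne'
  have hβ'_ne : d t ^ (1 - β) ≠ 0 := (Real.rpow_pos_of_pos (hd_pos t) _).ne'
  calc ∑ s, d s ^ β * P s t
      = ∑ s, A s t / d t ^ (1 - β) := by
        refine Finset.sum_congr rfl fun s _ => ?_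
        rw [hP]
        field_simp [hβ_ne s]
    _ = d t ^ β := by
        rw [← Finset.sum_div, hcol, div_eq_iff hβ'_ne, hsplit]

variable [Field K]

theorem dotProduct_eq_of_vecMul_eq_self {P : Matrix ι ι K} {w : ι → K} (hw : w ᵥ* P = w)
    {α : K} (hα : α ≠ 0) {π r x : ι → K} (hπ : π + α • r = α • x + (1 - α) • (P *ᵥ π)) :
    w ⬝ᵥ π = w ⬝ᵥ (x - r) := by
  have hpair := congrArg (w ⬝ᵥ ·) hπ
  simp only [dotProduct_add, dotProduct_smul, dotProduct_mulVec, hw, smul_eq_mul] at hpair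
  rw [dotProduct_sub]
  exact mul_left_cancel₀ hα (by linear_combination hpair)

end Matrix

open Matrix

theorem degree_weighted_mass_conservation_general {n : ℕ}
    (A : Matrix (Fin n) (Fin n) ℝ) (hA_symm : A.IsSymm)
    (d : Fin n → ℝ) (hd : ∀ s, d s = ∑ t, A s t) (hd1 : ∀ s, 1 ≤ d s)
    (β : ℝ)
    (P : Matrix (Fin n) (Fin n) ℝ)
    (hP : ∀ s t, P s t = A s t / (d s ^ β * d t ^ (1 - β)))
    (α : ℝ) (hα0 : 0 < α)
    (πh r x : Fin n → ℝ)
    (hinv : πh + α • r = α • x + (1 - α) • (P.mulVec πh)) :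
    (∑ s, d s ^ β * πh s = ∑ s, d s ^ β * (x s - r s)) ∧
    ∀ π : Fin n → ℝ, π = α • x + (1 - α) • (P.mulVec π) →
      ∑ s, d s ^ β * π s = ∑ s, d s ^ β * x s := by
  have hw := rpow_vecMul_eq_self_of_isSymm hA_symm hd
    (fun s => one_pos.trans_le (hd1 s)) hP
  refine ⟨dotProduct_eq_of_vecMul_eq_self hw hα0.ne' hinv, fun π hπ => ?_⟩
  have h := dotProduct_eq_of_vecMul_eq_self hw hα0.ne' (r := 0) (by simpa using hπ)
  rwa [sub_zero] at h

/-- Degree-weighted mass conservation under the invariant: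
`∑_s d(s)^β·π̂(s) = ∑_s d(s)^β·(x(s) − r(s))`; in particular any solution `π`
of `π = α·x + (1−α)·P·π` satisfies `∑_s d(s)^β·π(s) = ∑_s d(s)^β·x(s)`. -/
theorem degree_weighted_mass_conservation {n : ℕ} (hn : 1 ≤ n)
    (A : Matrix (Fin n) (Fin n) ℝ) (hA_symm : A.IsSymm)
    (hA01 : ∀ s t, A s t = 0 ∨ A s t = 1)
    (d : Fin n → ℝ) (hd : ∀ s, d s = ∑ t, A s t) (hd1 : ∀ s, 1 ≤ d s)
    (β : ℝ) (hβ0 : 0 ≤ β) (hβ1 : β ≤ 1)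
    (P : Matrix (Fin n) (Fin n) ℝ)
    (hP : ∀ s t, P s t = A s t / (d s ^ β * d t ^ (1 - β)))
    (α : ℝ) (hα0 : 0 < α) (hα1 : α < 1)
    (πh r x : Fin n → ℝ)
    (hinv : πh + α • r = α • x + (1 - α) • (P.mulVec πh)) :
    (∑ s, d s ^ β * πh s = ∑ s, d s ^ β * (x s - r s)) ∧
    ∀ π : Fin n → ℝ, π = α • x + (1 - α) • (P.mulVec π) →
      ∑ s, d s ^ β * π s = ∑ s, d s ^ β * x s :=
  degree_weighted_mass_conservation_general A hA_symm d hd hd1 β P hP α hα0 πh r x hinv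
end

section
/- Perturbation bound used in the proof of Theorem 2 (the 2ε lemma): Let β ∈ [0,1] and ε > 0. Let d : V → ℝ satisfy d(t) ≥ 1 for every t ∈ V, let u ≠ v be two distinct nodes, and define d′ : V → ℝ by d′(u) = d(u)+1, d′(v) = d(v)+1, and d′(t) = d(t) for t ∉ {u,v}. If r ∈ ℝ^n satisfies |r(t)| ≤ ε·d(t)^{1−β} for every t ∈ V, then |∑_{t∈V} (d′(t)^β − d(t)^β)·r(t)| ≤ 2ε. -/
/-! Concavity of `x ↦ x ^ β` (Bernoulli's inequality) gives `0 ≤ (x + 1) ^ β - x ^ β ≤ x ^ (β - 1)`,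
so a unit increment of the degree `d t` moves `d t ^ β * r t` by at most
`d t ^ (β - 1) * ε * d t ^ (1 - β) = ε`. Only the two nodes `u` and `v` change, whence `2 ε`. -/

namespace Real

variable {x β : ℝ}

theorem rpow_add_one_sub_rpow_le (hx : 0 < x) (hβ0 : 0 ≤ β) (hβ1 : β ≤ 1) :
    (x + 1) ^ β - x ^ β ≤ x ^ (β - 1) := by
  have h_factor : (x + 1) ^ β = x ^ β * (1 + x⁻¹) ^ β := by
    rw [← mul_rpow hx.le (by positivity), mul_add, mul_one, mul_inv_cancel₀ hx.ne']
  have h_bernoulli : (1 + x⁻¹) ^ β ≤ 1 + β * x⁻¹ :=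
    rpow_one_add_le_one_add_mul_self (by linarith [inv_pos.mpr hx]) hβ0 hβ1
  calc (x + 1) ^ β - x ^ β ≤ x ^ β * (1 + β * x⁻¹) - x ^ β := by
        rw [h_factor]; gcongr
    _ = β * x ^ (β - 1) := by rw [rpow_sub_one hx.ne']; ring
    _ ≤ x ^ (β - 1) := mul_le_of_le_one_left (by positivity) hβ1

theorem abs_rpow_add_one_sub_rpow_le (hx : 0 < x) (hβ0 : 0 ≤ β) (hβ1 : β ≤ 1) :
    |(x + 1) ^ β - x ^ β| ≤ x ^ (β - 1) := by
  rw [abs_of_nonneg (sub_nonneg.mpr (rpow_le_rpow hx.le (by linarith) hβ0))]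
  exact rpow_add_one_sub_rpow_le hx hβ0 hβ1

theorem abs_rpow_add_one_sub_rpow_mul_le {ε r : ℝ} (hx : 0 < x) (hβ0 : 0 ≤ β) (hβ1 : β ≤ 1)
    (hr : |r| ≤ ε * x ^ (1 - β)) :
    |((x + 1) ^ β - x ^ β) * r| ≤ ε := by
  calc |((x + 1) ^ β - x ^ β) * r| = |(x + 1) ^ β - x ^ β| * |r| := abs_mul _ _
    _ ≤ x ^ (β - 1) * (ε * x ^ (1 - β)) :=
        mul_le_mul (abs_rpow_add_one_sub_rpow_le hx hβ0 hβ1) hr (abs_nonneg r) (by positivity)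
    _ = ε := by rw [mul_left_comm, ← rpow_add hx]; norm_num

end Real

open Classical in
theorem perturbation_two_eps_general {n : ℕ}
    (β : ℝ) (hβ0 : 0 ≤ β) (hβ1 : β ≤ 1)
    (ε : ℝ)
    (d : Fin n → ℝ) (hd1 : ∀ t, 1 ≤ d t)
    (u v : Fin n) (huv : u ≠ v)
    (d' : Fin n → ℝ)
    (hd'u : d' u = d u + 1) (hd'v : d' v = d v + 1)
    (hd'w : ∀ t, t ≠ u → t ≠ v → d' t = d t)
    (r : Fin n → ℝ) (hr : ∀ t, |r t| ≤ ε * d t ^ (1 - β)) :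
    |∑ t, (d' t ^ β - d t ^ β) * r t| ≤ 2 * ε := by
  have h_term : ∀ t, d' t = d t + 1 → |(d' t ^ β - d t ^ β) * r t| ≤ ε := fun t ht => by
    rw [ht]
    exact Real.abs_rpow_add_one_sub_rpow_mul_le (by linarith [hd1 t]) hβ0 hβ1 (hr t)
  have h_pair : ∑ t, (d' t ^ β - d t ^ β) * r t =
      (d' u ^ β - d u ^ β) * r u + (d' v ^ β - d v ^ β) * r v :=
    Fintype.sum_eq_add u v huv fun t ht => by rw [hd'w t ht.1 ht.2, sub_self, zero_mul]
  rw [h_pair]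
  linarith [abs_add_le ((d' u ^ β - d u ^ β) * r u) ((d' v ^ β - d v ^ β) * r v),
    h_term u hd'u, h_term v hd'v]

open Classical in
/-- Perturbation bound used in the proof of Theorem 2 (the 2ε lemma):
if the degrees of exactly two distinct nodes `u ≠ v` increase by one and
`|r(t)| ≤ ε·d(t)^{1−β}` for every node, then
`|∑_t (d′(t)^β − d(t)^β)·r(t)| ≤ 2ε`. -/
theorem perturbation_two_eps {n : ℕ} (hn : 2 ≤ n)
    (β : ℝ) (hβ0 : 0 ≤ β) (hβ1 : β ≤ 1)
    (ε : ℝ) (hε : 0 < ε)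
    (d : Fin n → ℝ) (hd1 : ∀ t, 1 ≤ d t)
    (u v : Fin n) (huv : u ≠ v)
    (d' : Fin n → ℝ)
    (hd'u : d' u = d u + 1) (hd'v : d' v = d v + 1)
    (hd'w : ∀ t, t ≠ u → t ≠ v → d' t = d t)
    (r : Fin n → ℝ) (hr : ∀ t, |r t| ≤ ε * d t ^ (1 - β)) :
    |∑ t, (d' t ^ β - d t ^ β) * r t| ≤ 2 * ε :=
  perturbation_two_eps_general β hβ0 hβ1 ε d hd1 u v huv d' hd'u hd'v hd'w r hr
end

section
/- Batch update equals sequential update (worked identity for two insertions at a common endpoint): Let α ∈ (0,1), β ∈ [0,1], let d_u, d_v, d_y > 0, and let π̂_u, r_u, x_u, π̂_v, π̂_y be real numbers. Sequential update: set π̂₁ = π̂_u·(d_u+1)^{1−β}/d_u^{1−β}; r₁ = r_u + π̂₁·(d_u^{1−β} − (d_u+1)^{1−β})/(α·(d_u+1)^{1−β}); r₂ = r₁ + (1/α)·[ (π̂₁ + α·r₁ − α·x_u)·(d_u^β/(d_u+1)^β − 1) + (1−α)·π̂_v/((d_u+1)^β·d_v^{1−β}) ]; π̂₂ = π̂₁·(d_u+2)^{1−β}/(d_u+1)^{1−β};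 r₃ = r₂ + π̂₂·((d_u+1)^{1−β} − (d_u+2)^{1−β})/(α·(d_u+2)^{1−β}); r₄ = r₃ + (1/α)·[ (π̂₂ + α·r₃ − α·x_u)·((d_u+1)^β/(d_u+2)^β − 1) + (1−α)·π̂_y/((d_u+2)^β·d_y^{1−β}) ]. Batch update: set π̂′ = π̂_u·(d_u+2)^{1−β}/d_u^{1−β}; r′ = r_u + π̂′·(d_u^{1−β} − (d_u+2)^{1−β})/(α·(d_u+2)^{1−β}); r″ = r′ + (1/α)·[ (π̂′ + α·r′ − α·x_u)·(d_u^β/(d_u+2)^β − 1) + (1−α)·π̂_v/((d_u+2)^β·d_v^{1−β}) + (1−α)·π̂_y/((d_u+2)^β·d_y^{1−β}) ]. Then π̂₂ = π̂′ and r₄ = r″. -/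
/-!
Write `S = π̂_u + α r_u - α x_u`. Rescaling the estimate after a degree change from `d` to `d'`
compensates in the residual so that `π̂_u + α r_u`, hence `S`, is unchanged. A push step raising
the degree from `d` to `d'` gives `d'^β S' = d^β S + Σ_w (1-α) π̂_w / d_w^{1-β}` over the new
neighbours `w`. Both schedules thus rescale the estimate to the same value and add the same two
terms to `d_u^β S`, so they end with the same `S`, hence the same residual.
-/

section Field

variable {K : Type*} [Field K]

theorem add_mul_residual_eq_of_rescale {α p p' π π' r r' : K}
    (hα : α ≠ 0) (hp : p ≠ 0) (hp' : p' ≠ 0)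
    (hπ' : π' = π * p' / p) (hr' : r' = r + π' * (p - p') / (α * p')) :
    π' + α * r' = π + α * r := by
  subst hπ' hr'
  field_simp
  ring

theorem add_mul_residual_sub_mul_eq_of_push {α w w' π r r' x m : K}
    (hα : α ≠ 0) (hw' : w' ≠ 0)
    (hr' : r' = r + 1 / α * ((π + α * r - α * x) * (w / w' - 1) + m)) :
    (π + α * r' - α * x) * w' = (π + α * r - α * x) * w + m * w' := by
  subst hr'
  field_simp
  ring

theorem div_mul_mul_cancel_left {w q : K} (c : K) (hw : w ≠ 0) : c / (w * q) * w = c / q := by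
  rw [div_mul_eq_mul_div, mul_comm c w, mul_div_mul_left c q hw]

end Field

theorem batch_equals_sequential_update_general
    (α : ℝ) (hα0 : 0 < α)
    (β : ℝ)
    (du dv dy : ℝ) (hdu : 0 < du)
    (πhu ru xu πhv πhy : ℝ)
    -- sequential update
    (πh1 r1 r2 πh2 r3 r4 : ℝ)
    (hπh1 : πh1 = πhu * (du + 1) ^ (1 - β) / du ^ (1 - β))
    (hr1 : r1 = ru + πh1 * (du ^ (1 - β) - (du + 1) ^ (1 - β))
        / (α * (du + 1) ^ (1 - β)))
    (hr2 : r2 = r1 + (1 / α) * ((πh1 + α * r1 - α * xu)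
        * (du ^ β / (du + 1) ^ β - 1)
        + (1 - α) * πhv / ((du + 1) ^ β * dv ^ (1 - β))))
    (hπh2 : πh2 = πh1 * (du + 2) ^ (1 - β) / (du + 1) ^ (1 - β))
    (hr3 : r3 = r2 + πh2 * ((du + 1) ^ (1 - β) - (du + 2) ^ (1 - β))
        / (α * (du + 2) ^ (1 - β)))
    (hr4 : r4 = r3 + (1 / α) * ((πh2 + α * r3 - α * xu)
        * ((du + 1) ^ β / (du + 2) ^ β - 1)
        + (1 - α) * πhy / ((du + 2) ^ β * dy ^ (1 - β))))
    -- batch update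
    (πh' r' r'' : ℝ)
    (hπh' : πh' = πhu * (du + 2) ^ (1 - β) / du ^ (1 - β))
    (hr' : r' = ru + πh' * (du ^ (1 - β) - (du + 2) ^ (1 - β))
        / (α * (du + 2) ^ (1 - β)))
    (hr'' : r'' = r' + (1 / α) * ((πh' + α * r' - α * xu)
        * (du ^ β / (du + 2) ^ β - 1)
        + (1 - α) * πhv / ((du + 2) ^ β * dv ^ (1 - β))
        + (1 - α) * πhy / ((du + 2) ^ β * dy ^ (1 - β)))) :
    πh2 = πh' ∧ r4 = r'' := by
  have hα : α ≠ 0 := hα0.ne'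
  have hd1 : 0 < du + 1 := by linarith
  have hd2 : 0 < du + 2 := by linarith
  have p0 := (Real.rpow_pos_of_pos hdu (1 - β)).ne'
  have p1 := (Real.rpow_pos_of_pos hd1 (1 - β)).ne'
  have p2 := (Real.rpow_pos_of_pos hd2 (1 - β)).ne'
  have w1 := (Real.rpow_pos_of_pos hd1 β).ne'
  have w2 := (Real.rpow_pos_of_pos hd2 β).ne'
  have hπ : πh2 = πh' := by
    rw [hπh2, hπh1, hπh']
    field_simp
  refine ⟨hπ, ?_⟩
  have sequential : (πh2 + α * r4 - α * xu) * (du + 2) ^ β = (πhu + α * ru - α * xu) * du ^ β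
      + (1 - α) * πhv / dv ^ (1 - β) + (1 - α) * πhy / dy ^ (1 - β) := by
    rw [add_mul_residual_sub_mul_eq_of_push hα w2 hr4,
      add_mul_residual_eq_of_rescale hα p1 p2 hπh2 hr3,
      add_mul_residual_sub_mul_eq_of_push hα w1 hr2,
      add_mul_residual_eq_of_rescale hα p0 p1 hπh1 hr1,
      div_mul_mul_cancel_left _ w1, div_mul_mul_cancel_left _ w2]
  have batch : (πh' + α * r'' - α * xu) * (du + 2) ^ β = (πhu + α * ru - α * xu) * du ^ β
      + (1 - α) * πhv / dv ^ (1 - β) + (1 - α) * πhy / dy ^ (1 - β) := by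
    rw [add_assoc _ ((1 - α) * πhv / _)] at hr''
    rw [add_mul_residual_sub_mul_eq_of_push hα w2 hr'',
      add_mul_residual_eq_of_rescale hα p0 p2 hπh' hr',
      add_mul, div_mul_mul_cancel_left _ w2, div_mul_mul_cancel_left _ w2, add_assoc]
  rw [← batch, hπ] at sequential
  have hr := mul_right_cancel₀ w2 sequential
  exact mul_left_cancel₀ hα (by linarith)

/-- Batch update equals sequential update (worked identity for two insertions
of edges (u,v) and (u,y) at a common endpoint u): the sequential one-by-one
update and the simultaneous batch update produce the same final estimate and
residual at node u. -/
theorem batch_equals_sequential_update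
    (α : ℝ) (hα0 : 0 < α) (hα1 : α < 1)
    (β : ℝ) (hβ0 : 0 ≤ β) (hβ1 : β ≤ 1)
    (du dv dy : ℝ) (hdu : 0 < du) (hdv : 0 < dv) (hdy : 0 < dy)
    (πhu ru xu πhv πhy : ℝ)
    -- sequential update
    (πh1 r1 r2 πh2 r3 r4 : ℝ)
    (hπh1 : πh1 = πhu * (du + 1) ^ (1 - β) / du ^ (1 - β))
    (hr1 : r1 = ru + πh1 * (du ^ (1 - β) - (du + 1) ^ (1 - β))
        / (α * (du + 1) ^ (1 - β)))
    (hr2 : r2 = r1 + (1 / α) * ((πh1 + α * r1 - α * xu)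
        * (du ^ β / (du + 1) ^ β - 1)
        + (1 - α) * πhv / ((du + 1) ^ β * dv ^ (1 - β))))
    (hπh2 : πh2 = πh1 * (du + 2) ^ (1 - β) / (du + 1) ^ (1 - β))
    (hr3 : r3 = r2 + πh2 * ((du + 1) ^ (1 - β) - (du + 2) ^ (1 - β))
        / (α * (du + 2) ^ (1 - β)))
    (hr4 : r4 = r3 + (1 / α) * ((πh2 + α * r3 - α * xu)
        * ((du + 1) ^ β / (du + 2) ^ β - 1)
        + (1 - α) * πhy / ((du + 2) ^ β * dy ^ (1 - β))))
    -- batch update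
    (πh' r' r'' : ℝ)
    (hπh' : πh' = πhu * (du + 2) ^ (1 - β) / du ^ (1 - β))
    (hr' : r' = ru + πh' * (du ^ (1 - β) - (du + 2) ^ (1 - β))
        / (α * (du + 2) ^ (1 - β)))
    (hr'' : r'' = r' + (1 / α) * ((πh' + α * r' - α * xu)
        * (du ^ β / (du + 2) ^ β - 1)
        + (1 - α) * πhv / ((du + 2) ^ β * dv ^ (1 - β))
        + (1 - α) * πhy / ((du + 2) ^ β * dy ^ (1 - β)))) :
    πh2 = πh' ∧ r4 = r'' :=
  batch_equals_sequential_update_general α hα0 β du dv dy hdu πhu ru xu πhv πhy πh1 r1 r2 πh2 r3 r4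
    hπh1 hr1 hr2 hπh2 hr3 hr4 πh' r' r'' hπh' hr' hr''
end
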